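/- Let p ≥ 5 be a prime. (i) If 𝒞 is a conjugacy class of elements of order p in the symmetric group S_{2p}, then the Killing graph 𝒢(S_{2p}, 𝒞) is connected, i.e., K_𝒞 is irreducible. (ii) If 𝒞 is a conjugacy class of elements of order p in the alternating group A_{2p}, then the Killing graph 𝒢(A_{2p}, 𝒞) is connected, i.e., K_𝒞 is irreducible. -/

import Mathlib

/-!
Every element of the class is obtained from `x` by conjugating with a word in transpositions, so
it suffices to join each `z` in the class to `s z s` for every transposition `s`. If `x` is a
single `p`-cycle, `z` is adjacent to `z⁻¹` (everything centralises `z z⁻¹ = 1`), and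
`z⁻¹ (s z s)` moves at most four points, so it is centralised by a `p`-cycle supported on the
`2p - 4 ≥ p` points it fixes. If `x` is a product of two `p`-cycles and `s` swaps points of
different cycles of `z`, then `z (s z s) = (z s)²` is the square of a `2p`-cycle, so it lies in
the class and centralises itself; a transposition inside one cycle is a product of three crossing
ones. In `A_{2p}` the class of `x` does not split, because the centraliser of `x` in `S_{2p}`
contains an odd permutation, so its Killing graph is isomorphic to the one in `S_{2p}`.
-/

/-- The Killing graph of a conjugation-stable subset `C` of a group `G`:
vertices are the elements of `C`, and distinct `a b : C` are adjacent iff the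
centraliser of `a * b` meets `C`, i.e. iff the Killing form `K_C(a,b)` is nonzero. -/
def killingGraph {G : Type*} [Group G] (C : Set G) : SimpleGraph C :=
  SimpleGraph.fromRel fun a b => ∃ c ∈ C, Commute c ((a : G) * (b : G))

/-- The commuting graph on a subset `C` of a group: distinct elements are
adjacent iff they commute. -/
def commGraph {G : Type*} [Group G] (C : Set G) : SimpleGraph C :=
  SimpleGraph.fromRel fun a b => Commute (a : G) (b : G)

/-- The matrix of the Killing form on `C` over `ℚ`:
`K_C(a,b) = |C_G(ab) ∩ C|`. -/
noncomputable def killingMatrix {G : Type*} [Group G] (C : Set G) [Fintype C] :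
    Matrix C C ℚ :=
  Matrix.of fun a b => (Set.ncard {c ∈ C | Commute c ((a : G) * (b : G))} : ℚ)

/-- The set of involutions of a group. -/
def involSet (G : Type*) [Monoid G] : Set G := {x | x ^ 2 = 1 ∧ x ≠ 1}

open Equiv Equiv.Perm Finset

section KillingGraph

variable {G : Type*} [Group G]

theorem killingGraph_reachable_of_commute {C : Set G} {a b : C} {c : G} (hc : c ∈ C)
    (h : Commute c ((a : G) * b)) : (killingGraph C).Reachable a b := by
  by_cases hab : a = b
  · rw [hab]
  · exact SimpleGraph.Adj.reachable
      ((SimpleGraph.fromRel_adj _ a b).2 ⟨hab, Or.inl ⟨c, hc, h⟩⟩)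

theorem killingGraph_isConj_connected_of_closure_eq_top {x : G} {S : Set G}
    (hS : Subgroup.closure S = ⊤)
    (hstep : ∀ s ∈ S, ∀ z w : {y | IsConj x y}, (w : G) = s * z * s⁻¹ →
      (killingGraph {y | IsConj x y}).Reachable z w) :
    (killingGraph {y | IsConj x y}).Connected := by
  set C := {y | IsConj x y}
  have hconj (g : G) : ∀ z w : C, (w : G) = g * z * g⁻¹ → (killingGraph C).Reachable z w := by
    induction (hS ▸ Subgroup.mem_top g : g ∈ Subgroup.closure S)
      using Subgroup.closure_induction with
    | mem s hs => exact hstep s hs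
    | one =>
      intro z w hw
      rw [show z = w from Subtype.ext (by rw [hw]; group)]
    | mul g h _ _ ihg ihh =>
      intro z w hw
      have hy : h * z * h⁻¹ ∈ C := z.2.trans (isConj_iff.2 ⟨h, rfl⟩)
      exact (ihh z ⟨_, hy⟩ rfl).trans (ihg ⟨_, hy⟩ w (hw.trans (by group)))
    | inv g _ ih =>
      intro z w hw
      exact (ih w z (by rw [hw]; group)).symm
  refine (SimpleGraph.connected_iff _).2 ⟨fun z w => ?_, ⟨⟨x, IsConj.refl x⟩⟩⟩
  obtain ⟨g, hg⟩ := isConj_iff.1 (z.2.symm.trans w.2)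
  exact hconj g z w hg.symm

theorem killingGraph_image_connected_iff {H : Type*} [Group H] (f : H →* G)
    (hf : Function.Injective f) (C : Set H) :
    (killingGraph (f '' C)).Connected ↔ (killingGraph C).Connected := by
  have hcomm (c a : H) : Commute (f c) (f a) ↔ Commute c a := by
    simp only [Commute, SemiconjBy, ← map_mul, hf.eq_iff]
  let e : killingGraph C ≃g killingGraph (f '' C) :=
    { toEquiv := Equiv.Set.image f C hf
      map_rel_iff' := by
        intro a b
        simp only [killingGraph, SimpleGraph.fromRel_adj, Equiv.Set.image_apply, ne_eq,
          Subtype.mk.injEq, hf.eq_iff, ← Subtype.ext_iff, Set.exists_mem_image, ← map_mul,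
          hcomm] }
  exact e.connected_iff.symm

end KillingGraph

theorem Equiv.swap_mul_swap_mul_swap_of_ne {α : Type*} [DecidableEq α] {a b c : α} (hab : a ≠ b)
    (hac : a ≠ c) (hbc : b ≠ c) : swap b c * swap b a * swap a c = swap a b := by
  ext w
  simp only [Perm.mul_apply, swap_apply_def]
  split_ifs <;> simp_all

namespace Equiv.Perm

theorem sameCycle_swap_conj {α : Type*} [DecidableEq α] {f : Perm α} {a b x y : α} :
    (swap a b * f * swap a b).SameCycle x y ↔ f.SameCycle (swap a b x) (swap a b y) := by
  simpa only [swap_inv] using sameCycle_conj (g := swap a b) (f := f)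

variable {α : Type*} [Fintype α] [DecidableEq α] {p : ℕ}

theorem exists_cycleType_eq_replicate (hp : p.Prime) {σ : Perm α} (hσ : orderOf σ = p) :
    ∃ n, σ.cycleType = Multiset.replicate (n + 1) p ∧ #σ.support = (n + 1) * p := by
  obtain ⟨n, hn⟩ := cycleType_prime_order (hσ ▸ hp)
  rw [hσ] at hn
  exact ⟨n, hn, by rw [← sum_cycleType, hn, Multiset.sum_replicate, smul_eq_mul]⟩

theorem isConj_iff_of_orderOf_prime (hp : p.Prime) {σ τ : Perm α} (hσ : orderOf σ = p) :
    IsConj σ τ ↔ orderOf τ = p ∧ #τ.support = #σ.support := by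
  rw [isConj_iff_cycleType_eq]
  constructor
  · intro h
    rw [← lcm_cycleType, ← h, lcm_cycleType, ← sum_cycleType, ← h, sum_cycleType]
    exact ⟨hσ, rfl⟩
  · rintro ⟨hτ, hs⟩
    obtain ⟨m, hm, hm'⟩ := exists_cycleType_eq_replicate hp hσ
    obtain ⟨n, hn, hn'⟩ := exists_cycleType_eq_replicate hp hτ
    rw [hm, hn, Nat.eq_of_mul_eq_mul_right hp.pos (hm'.symm.trans (hs.symm.trans hn'))]

theorem card_support_eq_or_of_orderOf_prime (hp : p.Prime) {σ : Perm α} (hσ : orderOf σ = p)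
    (hα : Fintype.card α = 2 * p) : #σ.support = p ∨ #σ.support = 2 * p := by
  obtain ⟨n, -, hsum⟩ := exists_cycleType_eq_replicate hp hσ
  have hle : (n + 1) * p ≤ 2 * p := hsum ▸ hα ▸ card_le_univ _
  have : n ≤ 1 := by have := Nat.le_of_mul_le_mul_right hle hp.pos; omega
  interval_cases n <;> simp [hsum]

theorem card_support_cycleOf_of_orderOf_prime (hp : p.Prime) {σ : Perm α}
    (hσ : orderOf σ = p) {a : α} (ha : a ∈ σ.support) : #(σ.cycleOf a).support = p := by
  have hc : (σ.cycleOf a).IsCycle := isCycle_cycleOf _ (mem_support.1 ha)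
  have hdvd : #(σ.cycleOf a).support ∣ p := hc.orderOf ▸ hσ ▸ orderOf_cycleOf_dvd_orderOf σ a
  exact (hp.eq_one_or_self_of_dvd _ hdvd).resolve_left (by linarith [hc.two_le_card_support])

theorem exists_cycleType_singleton_commute {g : Perm α} {k : ℕ} (hk : 2 ≤ k)
    (h : #g.support + k ≤ Fintype.card α) :
    ∃ c : Perm α, c.cycleType = {k} ∧ Commute c g := by
  obtain ⟨c, hc⟩ := (exists_with_cycleType_iff {a // a ∉ g.support} (m := {k})).2
    ⟨by rw [Multiset.sum_singleton, Fintype.card_subtype_compl, Fintype.card_coe]; omega,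
      by simpa using hk⟩
  refine ⟨ofSubtype c, cycleType_ofSubtype.trans hc, Disjoint.commute ?_⟩
  rw [disjoint_iff_disjoint_support, support_ofSubtype]
  exact Finset.disjoint_left.2 fun a ha => by
    obtain ⟨b, -, rfl⟩ := Finset.mem_map.1 ha
    exact b.2

theorem sameCycle_mul_swap_of_sameCycle {f : Perm α} {u v w : α}
    (huv : ¬ f.SameCycle u v) (hw : f.SameCycle v w) : (f * swap u v).SameCycle u w := by
  set h := f * swap u v
  have hu : h u = f v := by simp [h]
  have hstep (k : ℕ) : h.SameCycle u ((f ^ (k + 1)) v) := by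
    induction k with
    | zero => simpa [← hu] using sameCycle_apply_right.2 (SameCycle.refl h u)
    | succ k ih =>
      rw [pow_succ', mul_apply]
      by_cases hv : (f ^ (k + 1)) v = v
      · rw [hv, ← hu]
        exact sameCycle_apply_right.2 (SameCycle.refl h u)
      · have hvu : (f ^ (k + 1)) v ≠ u := fun e =>
          huv (e ▸ sameCycle_pow_right.2 (SameCycle.refl f v)).symm
        have : h ((f ^ (k + 1)) v) = f ((f ^ (k + 1)) v) := by
          simp [h, swap_apply_of_ne_of_ne hvu hv]
        exact this ▸ sameCycle_apply_right.2 ih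
  obtain ⟨k, rfl⟩ := hw.exists_nat_pow_eq
  have hpos := orderOf_pos f
  have : (f ^ k) v = (f ^ (k + orderOf f - 1 + 1)) v := by
    rw [Nat.sub_add_cancel (by omega), pow_add, pow_orderOf_eq_one, mul_one]
  exact this ▸ hstep _

theorem isCycle_mul_swap_of_not_sameCycle {f : Perm α} {u v : α} (huv : ¬ f.SameCycle u v)
    (hcover : ∀ w, f.SameCycle u w ∨ f.SameCycle v w) :
    (f * swap u v).IsCycle ∧ (f * swap u v).support = univ := by
  have hvu : ¬ f.SameCycle v u := fun h => huv h.symm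
  have hall (w : α) : (f * swap u v).SameCycle u w := by
    rcases hcover w with hw | hw
    · have := sameCycle_mul_swap_of_sameCycle hvu hw
      rw [swap_comm] at this
      exact (sameCycle_mul_swap_of_sameCycle huv (SameCycle.refl f v)).trans this
    · exact sameCycle_mul_swap_of_sameCycle huv hw
  have hu : (f * swap u v) u ≠ u := by
    simpa using fun h : f v = u => hvu ⟨1, by simpa using h⟩
  exact ⟨⟨u, hu, fun w _ => hall w⟩,
    eq_univ_of_forall fun w => mem_support.2 fun h => hu ((hall w).apply_eq_self_iff.2 h)⟩

theorem orderOf_sq_of_isCycle_of_support_eq_univ {h : Perm α} (hc : h.IsCycle)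
    (hs : h.support = univ) (hα : Fintype.card α = 2 * p) (hp : 2 ≤ p) :
    orderOf (h ^ 2) = p ∧ #(h ^ 2).support = 2 * p := by
  have hord : orderOf h = 2 * p := by rw [hc.orderOf, hs, card_univ, hα]
  constructor
  · rw [orderOf_pow, hord, Nat.gcd_mul_right_left]
    omega
  · rw [hc.support_pow_of_pos_of_lt_orderOf two_pos (by omega), hs, card_univ, hα]

section PrimeOrderFixedPointFree

variable (hp : p.Prime) (hα : Fintype.card α = 2 * p) {σ : Perm α} (hσ : orderOf σ = p)
  (hs : σ.support = univ)
include hp hα hσ hs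

theorem sameCycle_or_sameCycle_of_not_sameCycle {u v : α} (huv : ¬ σ.SameCycle u v) (w : α) :
    σ.SameCycle u w ∨ σ.SameCycle v w := by
  have hcard (a : α) := card_support_cycleOf_of_orderOf_prime hp hσ (hs ▸ mem_univ a)
  have hdisj : _root_.Disjoint (σ.cycleOf u).support (σ.cycleOf v).support :=
    disjoint_left.2 fun y hyu hyv => huv
      ((mem_support_cycleOf_iff.1 hyu).1.trans (mem_support_cycleOf_iff.1 hyv).1.symm)
  have hunion : (σ.cycleOf u).support ∪ (σ.cycleOf v).support = univ := by
    apply eq_univ_of_card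
    rw [card_union_of_disjoint hdisj, hcard, hcard, hα, two_mul]
  have hw := hunion ▸ mem_univ w
  rcases mem_union.1 hw with h | h
  · exact Or.inl (mem_support_cycleOf_iff.1 h).1
  · exact Or.inr (mem_support_cycleOf_iff.1 h).1

theorem exists_not_sameCycle (u : α) : ∃ v, ¬ σ.SameCycle u v := by
  have hcard := card_support_cycleOf_of_orderOf_prime hp hσ (hs ▸ mem_univ u)
  obtain ⟨v, hv⟩ : ((σ.cycleOf u).support)ᶜ.Nonempty := by
    rw [← card_pos, card_compl, hcard, hα]
    exact Nat.sub_pos_of_lt (by linarith [hp.pos])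
  exact ⟨v, fun h => mem_compl.1 hv (mem_support_cycleOf_iff.2 ⟨h, hs ▸ mem_univ u⟩)⟩

end PrimeOrderFixedPointFree

theorem not_centralizer_le_alternatingGroup_of_orderOf_prime (hp : p.Prime) {σ : Perm α}
    (hσ : orderOf σ = p) (hα : p + 2 ≤ Fintype.card α) :
    ¬ Subgroup.centralizer {σ} ≤ alternatingGroup α := by
  rw [centralizer_le_alternating_iff]
  rintro ⟨-, hle, hcount⟩
  obtain ⟨n, hn, hsum⟩ := exists_cycleType_eq_replicate hp hσ
  have hn0 : n = 0 := by simpa [hn] using hcount p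
  rw [sum_cycleType, hsum, hn0] at hle
  omega

end Equiv.Perm

theorem alternatingGroup.subtype_image_isConj {α : Type*} [Fintype α] [DecidableEq α]
    (x : alternatingGroup α)
    (hx : ¬ Subgroup.centralizer {(x : Perm α)} ≤ alternatingGroup α) :
    (alternatingGroup α).subtype '' {y | IsConj x y} = {y : Perm α | IsConj (x : Perm α) y} := by
  refine Set.Subset.antisymm ?_ fun y hy => ?_
  · rintro _ ⟨y, hy, rfl⟩
    exact (alternatingGroup α).subtype.map_isConj hy
  obtain ⟨g, rfl⟩ := isConj_iff.1 hy
  obtain ⟨δ, hδx, hδ⟩ := SetLike.not_le_iff_exists.1 hx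
  rw [Subgroup.mem_centralizer_singleton_iff] at hδx
  rw [mem_alternatingGroup, ← ne_eq, Int.units_ne_iff_eq_neg] at hδ
  obtain ⟨g', hg', hconj⟩ : ∃ g' ∈ alternatingGroup α, g' * x * g'⁻¹ = g * x * g⁻¹ := by
    rcases Int.units_eq_one_or (sign g) with hg | hg
    · exact ⟨g, hg, rfl⟩
    · refine ⟨g * δ, by simp [mem_alternatingGroup, hg, hδ], ?_⟩
      rw [mul_inv_rev, mul_assoc g δ, hδx]
      group
  exact ⟨⟨g', hg'⟩ * x * ⟨g', hg'⟩⁻¹, isConj_iff.2 ⟨_, rfl⟩, hconj⟩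

section ConjugacyClassOfPrimeOrder

variable {α : Type*} [Fintype α] [DecidableEq α] {p : ℕ} (hp : p.Prime) {x : Perm α}
  (hx : orderOf x = p)
include hp hx

theorem killingGraph_reachable_swap_conj_of_card_support_eq (hxs : #x.support = p)
    (hα : p + 4 ≤ Fintype.card α) {z w : {y | IsConj x y}} {a b : α} (hab : a ≠ b)
    (hw : (w : Perm α) = swap a b * z * swap a b) :
    (killingGraph {y | IsConj x y}).Reachable z w := by
  obtain ⟨hz, hzs⟩ := (isConj_iff_of_orderOf_prime hp hx).1 z.2
  have hzi : (z : Perm α)⁻¹ ∈ {y | IsConj x y} :=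
    (isConj_iff_of_orderOf_prime hp hx).2 ⟨by rw [orderOf_inv, hz], by rw [support_inv, hzs]⟩
  have hzw : (z : Perm α)⁻¹ * w = swap ((z : Perm α)⁻¹ a) ((z : Perm α)⁻¹ b) * swap a b := by
    rw [hw, swap_apply_apply, inv_inv]
    group
  have hsmall : #((z : Perm α)⁻¹ * w).support + p ≤ Fintype.card α := by
    have : #((z : Perm α)⁻¹ * w).support ≤ 2 + 2 := calc
      _ ≤ #(swap ((z : Perm α)⁻¹ a) ((z : Perm α)⁻¹ b)).support + #(swap a b).support :=
        hzw ▸ (card_le_card (support_mul_le _ _)).trans (card_union_le _ _)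
      _ = 2 + 2 := by
        rw [card_support_swap hab, card_support_swap ((z : Perm α)⁻¹.injective.ne hab)]
    omega
  obtain ⟨c, hc, hcomm⟩ := exists_cycleType_singleton_commute hp.two_le hsmall
  have hcC : c ∈ {y | IsConj x y} := (isConj_iff_of_orderOf_prime hp hx).2
    ⟨by rw [← lcm_cycleType, hc, Multiset.lcm_singleton, normalize_eq],
      by rw [← sum_cycleType, hc, Multiset.sum_singleton, hxs]⟩
  have hinv : (killingGraph {y | IsConj x y}).Reachable z ⟨_, hzi⟩ :=
    killingGraph_reachable_of_commute z.2 (by simp)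
  exact hinv.trans (killingGraph_reachable_of_commute hcC hcomm)

variable (hα : Fintype.card α = 2 * p) (hxs : #x.support = 2 * p)
include hα hxs

theorem killingGraph_reachable_swap_conj_of_not_sameCycle {z w : {y | IsConj x y}} {u v : α}
    (huv : ¬ (z : Perm α).SameCycle u v) (hw : (w : Perm α) = swap u v * z * swap u v) :
    (killingGraph {y | IsConj x y}).Reachable z w := by
  obtain ⟨hz, hzs⟩ := (isConj_iff_of_orderOf_prime hp hx).1 z.2
  have hsupp : (z : Perm α).support = univ := eq_univ_of_card _ (hzs.trans (hxs.trans hα.symm))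
  obtain ⟨hc, hcs⟩ := isCycle_mul_swap_of_not_sameCycle huv
    (sameCycle_or_sameCycle_of_not_sameCycle hp hα hz hsupp huv)
  have hprod : (z : Perm α) * w = ((z : Perm α) * swap u v) ^ 2 := by
    rw [hw, sq]
    group
  refine killingGraph_reachable_of_commute (c := (z : Perm α) * w) ?_ (Commute.refl _)
  rw [hprod, Set.mem_ofPred_eq, isConj_iff_of_orderOf_prime hp hx, hxs]
  exact orderOf_sq_of_isCycle_of_support_eq_univ hc hcs hα hp.two_le

theorem killingGraph_reachable_swap_conj_of_card_support_eq_two_mul {z w : {y | IsConj x y}}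
    {a b : α} (hab : a ≠ b) (hw : (w : Perm α) = swap a b * z * swap a b) :
    (killingGraph {y | IsConj x y}).Reachable z w := by
  by_cases hsame : (z : Perm α).SameCycle a b
  case neg => exact killingGraph_reachable_swap_conj_of_not_sameCycle hp hx hα hxs hsame hw
  obtain ⟨hz, hzs⟩ := (isConj_iff_of_orderOf_prime hp hx).1 z.2
  have hsupp : (z : Perm α).support = univ := eq_univ_of_card _ (hzs.trans (hxs.trans hα.symm))
  -- `swap a b = swap b c * swap b a * swap a c`, and in this order each transposition joins
  -- two different cycles of the permutation it conjugates
  obtain ⟨c, hc⟩ := exists_not_sameCycle hp hα hz hsupp a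
  have hac : a ≠ c := fun h => hc (h ▸ SameCycle.refl _ a)
  have hbc : b ≠ c := fun h => hc (h ▸ hsame)
  have hmem (u v : α) (y : {y | IsConj x y}) :
      swap u v * (y : Perm α) * swap u v ∈ {y | IsConj x y} :=
    y.2.trans (isConj_iff.2 ⟨swap u v, by rw [swap_inv]⟩)
  set z₁ : {y | IsConj x y} := ⟨_, hmem a c z⟩
  set z₂ : {y | IsConj x y} := ⟨_, hmem b a z₁⟩
  have h₁ : ¬ (z₁ : Perm α).SameCycle b a := by
    rw [sameCycle_swap_conj, swap_apply_of_ne_of_ne hab.symm hbc, swap_apply_left]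
    exact fun h => hc (hsame.trans h)
  have h₂ : ¬ (z₂ : Perm α).SameCycle b c := by
    rw [sameCycle_swap_conj, swap_apply_left, swap_apply_of_ne_of_ne hbc.symm hac.symm,
      sameCycle_swap_conj, swap_apply_left, swap_apply_right]
    exact fun h => hc h.symm
  have hw₂ : (w : Perm α) = swap b c * z₂ * swap b c := by
    have hinv : swap a c * swap b a * swap b c = swap a b := by
      rw [← swap_inv a b, ← swap_mul_swap_mul_swap_of_ne hab hac hbc]
      simp only [mul_inv_rev, swap_inv, mul_assoc]
    rw [hw]
    nth_rw 1 [← swap_mul_swap_mul_swap_of_ne hab hac hbc]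
    rw [← hinv]
    simp only [z₂, z₁, mul_assoc]
  exact (killingGraph_reachable_swap_conj_of_not_sameCycle hp hx hα hxs hc rfl).trans
    ((killingGraph_reachable_swap_conj_of_not_sameCycle hp hx hα hxs h₁ rfl).trans
      (killingGraph_reachable_swap_conj_of_not_sameCycle hp hx hα hxs h₂ hw₂))

end ConjugacyClassOfPrimeOrder

theorem killingGraph_isConj_connected_of_orderOf_prime {α : Type*} [Fintype α] [DecidableEq α]
    {p : ℕ} (hp : p.Prime) (hp4 : 4 ≤ p) (hα : Fintype.card α = 2 * p) {x : Perm α}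
    (hx : orderOf x = p) : (killingGraph {y | IsConj x y}).Connected := by
  refine killingGraph_isConj_connected_of_closure_eq_top closure_isSwap ?_
  rintro _ ⟨a, b, hab, rfl⟩ z w hw
  rw [swap_inv] at hw
  rcases card_support_eq_or_of_orderOf_prime hp hx hα with hxs | hxs
  · exact killingGraph_reachable_swap_conj_of_card_support_eq hp hx hxs (by omega) hab hw
  · exact killingGraph_reachable_swap_conj_of_card_support_eq_two_mul hp hx hα hxs hab hw

/-- For a prime `p ≥ 5`: (i) the Killing graph of any conjugacy class of elements
of order `p` in `S_{2p}` is connected; (ii) likewise in `A_{2p}`. -/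
theorem statement18 (p : ℕ) (hp : p.Prime) (hp5 : 5 ≤ p) :
    (∀ x : Equiv.Perm (Fin (2 * p)), orderOf x = p →
      (killingGraph {h : Equiv.Perm (Fin (2 * p)) | IsConj x h}).Connected) ∧
    (∀ x : alternatingGroup (Fin (2 * p)), orderOf x = p →
      (killingGraph {h : alternatingGroup (Fin (2 * p)) | IsConj x h}).Connected) := by
  have hα : Fintype.card (Fin (2 * p)) = 2 * p := Fintype.card_fin _
  refine ⟨fun x hx => killingGraph_isConj_connected_of_orderOf_prime hp (by omega) hα hx,
    fun x hx => ?_⟩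
  rw [← Subgroup.orderOf_coe] at hx
  rw [← killingGraph_image_connected_iff _ (alternatingGroup _).subtype_injective,
    alternatingGroup.subtype_image_isConj x
      (not_centralizer_le_alternatingGroup_of_orderOf_prime hp hx (by omega))]
  exact killingGraph_isConj_connected_of_orderOf_prime hp (by omega) hα hx
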